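/- Let G = (V,E) be an undirected connected unweighted graph, S ⊆ V, u ∈ S, v ∈ V \ S a neighbor of u, and let S' = (S\{u})∪{v}. Define H⁺ = {x ∈ V : dist(S,x) < dist(S',x)} and H⁻ = {x ∈ V : dist(S,x) > dist(S',x)}. Then f(S) − f(S') = |H⁻| − |H⁺|. -/

import Mathlib

open SimpleGraph Finset

/-- Distance from a group `S` to a vertex `x` in an unweighted graph. -/
noncomputable def setDist {V : Type*} (G : SimpleGraph V) (S : Finset V) (x : V) : ℕ :=
  sInf {d | ∃ s ∈ S, G.dist s x = d}

/-- Farness of a group `S`. -/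
noncomputable def farness {V : Type*} [Fintype V] [DecidableEq V]
    (G : SimpleGraph V) (S : Finset V) : ℕ :=
  ∑ x ∈ Sᶜ, setDist G S x

/-- Edge relation of the BFS DAG rooted at `S`. -/
def bfsEdge {V : Type*} (G : SimpleGraph V) (S : Finset V) (x y : V) : Prop :=
  G.Adj x y ∧ setDist G S y = setDist G S x + 1

/-- Vertices reachable from `v` in the BFS DAG rooted at `S` (including `v`). -/
def reach {V : Type*} (G : SimpleGraph V) (S : Finset V) (v : V) : Set V :=
  {x | Relation.ReflTransGen (bfsEdge G S) v x}

/-! Swapping `u` for a neighbour changes every distance `dist(S, x)` by at most one, so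
`f(S) - f(S')` is a sum of terms in `{-1, 0, 1}`: `+1` exactly on `H⁻` and `-1` exactly on `H⁺`. -/

theorem Finset.sum_sub_sum_eq_card_filter_sub_card_filter {ι : Type*} (s : Finset ι)
    (f g : ι → ℕ) (hfg : ∀ i ∈ s, f i ≤ g i + 1) (hgf : ∀ i ∈ s, g i ≤ f i + 1) :
    ∑ i ∈ s, (f i : ℤ) - ∑ i ∈ s, (g i : ℤ) =
      (#{i ∈ s | g i < f i} : ℤ) - #{i ∈ s | f i < g i} := by
  rw [← sum_sub_distrib, natCast_card_filter, natCast_card_filter, ← sum_sub_distrib]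
  refine sum_congr rfl fun i hi => ?_
  have := hfg i hi
  have := hgf i hi
  split_ifs <;> omega

section SetDist

variable {V : Type*} (G : SimpleGraph V)

theorem setDist_le_dist {S : Finset V} {s : V} (hs : s ∈ S) (x : V) :
    setDist G S x ≤ G.dist s x :=
  Nat.sInf_le ⟨s, hs, rfl⟩

theorem exists_dist_eq_setDist {S : Finset V} (hS : S.Nonempty) (x : V) :
    ∃ s ∈ S, G.dist s x = setDist G S x :=
  Nat.sInf_mem (s := {d | ∃ s ∈ S, G.dist s x = d}) (hS.elim fun s hs => ⟨_, s, hs, rfl⟩)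

theorem setDist_of_mem {S : Finset V} {x : V} (hx : x ∈ S) : setDist G S x = 0 :=
  Nat.eq_zero_of_le_zero (by simpa using setDist_le_dist G hx x)

theorem setDist_le_setDist_add_one {S T : Finset V} (hS : S.Nonempty)
    (hST : ∀ s ∈ S, ∃ t ∈ T, t = s ∨ G.Adj t s) (x : V) :
    setDist G T x ≤ setDist G S x + 1 := by
  obtain ⟨s, hs, hsx⟩ := exists_dist_eq_setDist G hS x
  obtain ⟨t, ht, hts⟩ := hST s hs
  have hreach : G.Reachable t s := hts.elim (fun h => h ▸ Reachable.refl t) Adj.reachable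
  have hdist : G.dist t s ≤ 1 := by
    rcases hts with rfl | hadj
    · simp
    · exact (dist_eq_one_iff_adj.mpr hadj).le
  calc setDist G T x ≤ G.dist t x := setDist_le_dist G ht x
    _ ≤ G.dist t s + G.dist s x := hreach.dist_triangle_left x
    _ ≤ setDist G S x + 1 := by omega

theorem farness_eq_sum [Fintype V] [DecidableEq V] (S : Finset V) :
    farness G S = ∑ x, setDist G S x := by
  rw [farness, ← sum_compl_add_sum S, sum_eq_zero fun x hx => setDist_of_mem G hx, add_zero]

end SetDist

theorem stmt3_general {V : Type*} [Fintype V] [DecidableEq V] (G : SimpleGraph V)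
    (S : Finset V) (u v : V)
    (hu : u ∈ S) (hadj : G.Adj u v) :
    (farness G S : ℤ) - farness G (insert v (S.erase u)) =
      ({x : V | setDist G S x > setDist G (insert v (S.erase u)) x}.ncard : ℤ) -
        ({x : V | setDist G S x < setDist G (insert v (S.erase u)) x}.ncard : ℤ) := by
  set S' := insert v (S.erase u)
  have hS'S : ∀ x, setDist G S' x ≤ setDist G S x + 1 :=
    setDist_le_setDist_add_one G ⟨u, hu⟩ fun s hs => by
      by_cases hsu : s = u
      · exact ⟨v, mem_insert_self _ _, .inr (hsu ▸ hadj.symm)⟩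
      · exact ⟨s, mem_insert_of_mem (mem_erase.mpr ⟨hsu, hs⟩), .inl rfl⟩
  have hSS' : ∀ x, setDist G S x ≤ setDist G S' x + 1 :=
    setDist_le_setDist_add_one G (insert_nonempty _ _) fun s hs => by
      rcases mem_insert.mp hs with rfl | hs
      · exact ⟨u, hu, .inr hadj⟩
      · exact ⟨s, mem_of_mem_erase hs, .inl rfl⟩
  simp only [farness_eq_sum, Nat.cast_sum, gt_iff_lt, Set.ncard_eq_toFinset_card',
    Set.toFinset_ofPred]
  exact sum_sub_sum_eq_card_filter_sub_card_filter _ _ _ (fun x _ => hSS' x) (fun x _ => hS'S x)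

theorem stmt3 {V : Type*} [Fintype V] [DecidableEq V] (G : SimpleGraph V)
    (hconn : G.Connected) (S : Finset V) (hS : S.Nonempty) (u v : V)
    (hu : u ∈ S) (hv : v ∉ S) (hadj : G.Adj u v) :
    (farness G S : ℤ) - farness G (insert v (S.erase u)) =
      ({x : V | setDist G S x > setDist G (insert v (S.erase u)) x}.ncard : ℤ) -
        ({x : V | setDist G S x < setDist G (insert v (S.erase u)) x}.ncard : ℤ) :=
  stmt3_general G S u v hu hadj
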